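/- arXiv:2205.05887 — 2 statements merged into one kernel-verified Lean document; each statement's English description precedes it below -/
import Mathlib

section
/- Every edge of the 17-relative-neighborhood graph of P is an edge of the 17-geographic-neighborhood graph of P, i.e., 17RNG(P) ⊆ 17GNG(P). -/
open scoped Classical
open Real

noncomputable section

abbrev Pt : Type := EuclideanSpace ℝ (Fin 2)

/-- A perfect matching of a finite planar point set `P`, modeled as a
fixpoint-free involution of `P`. -/
def IsPM (P : Finset Pt) (m : Pt → Pt) : Prop :=
  ∀ p ∈ P, m p ∈ P ∧ m p ≠ p ∧ m (m p) = p

/-- The maximum edge length of the matching `m` on `P`. -/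
def lam (P : Finset Pt) (m : Pt → Pt) : ℝ :=
  sSup ((fun p => dist p (m p)) '' (P : Set Pt))

/-- The bottleneck value `λ*` of `P`. -/
def bottleneck (P : Finset Pt) : ℝ :=
  sInf {r | ∃ m, IsPM P m ∧ lam P m = r}

/-- The graph `G_r` on `P`: edges between distinct points at distance `≤ r`. -/
def Gr (P : Finset Pt) (r : ℝ) : SimpleGraph {x : Pt // x ∈ P} where
  Adj p q := p ≠ q ∧ dist (p : Pt) (q : Pt) ≤ r
  symm := by
    constructor
    intro p q h
    exact ⟨h.1.symm, by rw [dist_comm]; exact h.2⟩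
  loopless := by constructor; intro p h; exact h.1 rfl

/-- `G_r` contains a perfect matching. -/
def HasPM (P : Finset Pt) (r : ℝ) : Prop :=
  ∃ M : (Gr P r).Subgraph, M.IsPerfectMatching

/-- The closed 60° wedge of polar angles in `[i·60°, (i+1)·60°]`. -/
def wedge (i : Fin 6) : Set Pt :=
  {x | ∃ ρ θ : ℝ, 0 ≤ ρ ∧ (i : ℝ) * (π / 3) ≤ θ ∧ θ ≤ ((i : ℝ) + 1) * (π / 3) ∧
    x 0 = ρ * Real.cos θ ∧ x 1 = ρ * Real.sin θ}


lemma exists_idx {θ : ℝ} (h0 : 0 ≤ θ) (h1 : θ ≤ 2*π) :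
    ∃ i : Fin 6, (i:ℝ)*(π/3) ≤ θ ∧ θ ≤ ((i:ℝ)+1)*(π/3) := by
  have hπ := Real.pi_pos
  rcases le_or_gt θ (π/3) with h|h
  · refine ⟨⟨0, by norm_num⟩, ?_, ?_⟩ <;> push_cast <;> linarith
  rcases le_or_gt θ (2*(π/3)) with h2|h2
  · refine ⟨⟨1, by norm_num⟩, ?_, ?_⟩ <;> push_cast <;> linarith
  rcases le_or_gt θ (3*(π/3)) with h3|h3
  · refine ⟨⟨2, by norm_num⟩, ?_, ?_⟩ <;> push_cast <;> linarith
  rcases le_or_gt θ (4*(π/3)) with h4|h4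
  · refine ⟨⟨3, by norm_num⟩, ?_, ?_⟩ <;> push_cast <;> linarith
  rcases le_or_gt θ (5*(π/3)) with h5|h5
  · refine ⟨⟨4, by norm_num⟩, ?_, ?_⟩ <;> push_cast <;> linarith
  · refine ⟨⟨5, by norm_num⟩, ?_, ?_⟩ <;> push_cast <;> linarith

lemma exists_wedge (v : Pt) : ∃ i : Fin 6, v ∈ wedge i := by
  have hπ := Real.pi_pos
  rcases eq_or_ne v 0 with rfl|hv
  · exact ⟨0, 0, 0, le_rfl, by simp, by positivity, by simp, by simp⟩
  · set z : ℂ := ⟨v 0, v 1⟩ with hz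
    have hz0 : z ≠ 0 := by
      intro hz0
      apply hv
      have h0 : v 0 = 0 := by
        have := congrArg Complex.re hz0; simpa [hz] using this
      have h1 : v 1 = 0 := by
        have := congrArg Complex.im hz0; simpa [hz] using this
      ext j
      fin_cases j <;> simp [h0, h1]
    have hre : ‖z‖ * Real.cos z.arg = v 0 := Complex.norm_mul_cos_arg z
    have him : ‖z‖ * Real.sin z.arg = v 1 := Complex.norm_mul_sin_arg z
    have harg1 : -π < z.arg := Complex.neg_pi_lt_arg z
    have harg2 : z.arg ≤ π := Complex.arg_le_pi z
    set θ : ℝ := if z.arg < 0 then z.arg + 2*π else z.arg with hθ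
    have hcos : Real.cos θ = Real.cos z.arg := by
      rw [hθ]; split
      · rw [show z.arg + 2*π = z.arg + 2*π by ring, Real.cos_add_two_pi]
      · rfl
    have hsin : Real.sin θ = Real.sin z.arg := by
      rw [hθ]; split
      · rw [Real.sin_add_two_pi]
      · rfl
    have h0 : 0 ≤ θ := by rw [hθ]; split <;> [linarith; linarith [not_lt.mp ‹¬ z.arg < 0›]]
    have h1 : θ ≤ 2*π := by rw [hθ]; split <;> linarith
    obtain ⟨i, hi1, hi2⟩ := exists_idx h0 h1
    exact ⟨i, ‖z‖, θ, norm_nonneg _, hi1, hi2,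
      by rw [hcos, hre], by rw [hsin, him]⟩

lemma wedge_inner {i : Fin 6} {v w : Pt} (hv : v ∈ wedge i) (hw : w ∈ wedge i) :
    ‖v‖ * ‖w‖ / 2 ≤ (inner ℝ v w : ℝ) := by
  obtain ⟨ρ₁, θ₁, hρ₁, ha₁, hb₁, hx₁, hy₁⟩ := hv
  obtain ⟨ρ₂, θ₂, hρ₂, ha₂, hb₂, hx₂, hy₂⟩ := hw
  have hπ := Real.pi_pos
  have hnv : ‖v‖ = ρ₁ := by
    rw [EuclideanSpace.norm_eq]
    rw [Fin.sum_univ_two, hx₁, hy₁]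
    rw [show ‖ρ₁ * Real.cos θ₁‖ ^ 2 + ‖ρ₁ * Real.sin θ₁‖ ^ 2 = ρ₁ ^ 2 by
      rw [Real.norm_eq_abs, Real.norm_eq_abs, sq_abs, sq_abs]; nlinarith [Real.sin_sq_add_cos_sq θ₁]]
    exact Real.sqrt_sq hρ₁
  have hnw : ‖w‖ = ρ₂ := by
    rw [EuclideanSpace.norm_eq]
    rw [Fin.sum_univ_two, hx₂, hy₂]
    rw [show ‖ρ₂ * Real.cos θ₂‖ ^ 2 + ‖ρ₂ * Real.sin θ₂‖ ^ 2 = ρ₂ ^ 2 by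
      rw [Real.norm_eq_abs, Real.norm_eq_abs, sq_abs, sq_abs]; nlinarith [Real.sin_sq_add_cos_sq θ₂]]
    exact Real.sqrt_sq hρ₂
  have hinner : (inner ℝ v w : ℝ) = ρ₁ * ρ₂ * Real.cos (θ₁ - θ₂) := by
    rw [PiLp.inner_apply, Fin.sum_univ_two]
    simp only [RCLike.inner_apply, starRingEnd_apply, star_trivial]
    rw [hx₁, hy₁, hx₂, hy₂, Real.cos_sub]
    ring
  have habs : |θ₁ - θ₂| ≤ π / 3 := by
    rw [abs_le]; constructor <;> linarith
  have hcos : (1:ℝ)/2 ≤ Real.cos (θ₁ - θ₂) := by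
    have := Real.cos_le_cos_of_nonneg_of_le_pi (abs_nonneg (θ₁ - θ₂))
      (by linarith : (π/3 : ℝ) ≤ π) habs
    rw [Real.cos_pi_div_three] at this
    rwa [Real.cos_abs] at this
  rw [hinner, hnv, hnw]
  nlinarith [mul_nonneg hρ₁ hρ₂]

/-- `{p,q}` is an edge of `17RNG(P)`. -/
def rngEdge (P : Finset Pt) (p q : Pt) : Prop :=
  p ∈ P ∧ q ∈ P ∧ p ≠ q ∧
    (P.filter (fun x => dist x p < dist p q ∧ dist x q < dist p q)).card ≤ 16

/-- `{p,q}` is an edge of `17GNG(P)`. -/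
def gngEdge (P : Finset Pt) (p q : Pt) : Prop :=
  p ∈ P ∧ q ∈ P ∧ p ≠ q ∧ ∃ i : Fin 6, q - p ∈ wedge i ∧
    (P.filter (fun x => x ≠ p ∧ x - p ∈ wedge i ∧ dist p x < dist p q)).card ≤ 16

theorem rng_subset_gng (P : Finset Pt) (p q : Pt) (h : rngEdge P p q) :
    gngEdge P p q := by
  obtain ⟨hp, hq, hne, hcard⟩ := h
  obtain ⟨i, hwi⟩ := exists_wedge (q - p)
  refine ⟨hp, hq, hne, i, hwi, le_trans (Finset.card_le_card ?_) hcard⟩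
  intro x hx
  rw [Finset.mem_filter] at hx ⊢
  obtain ⟨hxP, hxp, hxw, hxd⟩ := hx
  refine ⟨hxP, by rwa [dist_comm], ?_⟩
  have h1 : dist p x = ‖x - p‖ := by rw [dist_comm, dist_eq_norm]
  have h2 : dist p q = ‖q - p‖ := by rw [dist_comm, dist_eq_norm]
  have hpos : (0:ℝ) < ‖x - p‖ := by
    rw [norm_pos_iff]; exact sub_ne_zero.mpr hxp
  have hlt : ‖x - p‖ < ‖q - p‖ := by rwa [h1, h2] at hxd
  have hinn := wedge_inner hxw hwi
  have hsq : ‖(x - p) - (q - p)‖ ^ 2 =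
      ‖x - p‖ ^ 2 - 2 * (inner ℝ (x - p) (q - p) : ℝ) + ‖q - p‖ ^ 2 :=
    norm_sub_sq_real _ _
  have hkey : ‖(x - p) - (q - p)‖ < ‖q - p‖ := by
    nlinarith [norm_nonneg ((x - p) - (q - p)), norm_nonneg (q - p)]
  have : (x - p) - (q - p) = x - q := by abel
  rw [this] at hkey
  rw [dist_eq_norm, h2]
  exact hkey
end
end

section
/- Let p, q be distinct points in the plane and let W be a closed 60° wedge with apex p containing q. If {p,q} is NOT an edge of 17GNG(P) via wedge W (i.e., more than 16 points of P ∩ (p+W) are strictly closer to p than q), then there exist at least 17 points x ∈ P with dist(p,x) < dist(p,q) and dist(q,x) < dist(p,q); consequently {p,q} is not an edge of 17RNG(P) witnessed in this direction. -/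
open scoped Classical InnerProductSpace
open Real

noncomputable section

/-- The closed convex cone spanned by `u` and `v`. -/
def cone2 (u v : Pt) : Set Pt := {x | ∃ a b : ℝ, 0 ≤ a ∧ 0 ≤ b ∧ x = a • u + b • v}

lemma key_poly (p1 p2 q1 q2 : ℝ) (h1 : 0 ≤ p1) (h2 : 0 ≤ p2) (h3 : 0 ≤ q1) (h4 : 0 ≤ q2) :
    (p1^2 + p1*p2 + p2^2) * (q1^2 + q1*q2 + q2^2)
      ≤ (2*(p1*q1 + p2*q2) + p1*q2 + p2*q1)^2 := by
  have hid : (2*(p1*q1 + p2*q2) + p1*q2 + p2*q1)^2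
      - (p1^2 + p1*p2 + p2^2) * (q1^2 + q1*q2 + q2^2)
      = 3*p1^2*q1^2 + 3*p2^2*q2^2 + 3*p1^2*q1*q2 + 3*p1*p2*q1^2
        + 3*p1*p2*q2^2 + 3*p2^2*q1*q2 + 9*p1*p2*q1*q2 := by ring
  have hpos : 0 ≤ 3*p1^2*q1^2 + 3*p2^2*q2^2 + 3*p1^2*q1*q2 + 3*p1*p2*q1^2
        + 3*p1*p2*q2^2 + 3*p2^2*q1*q2 + 9*p1*p2*q1*q2 := by positivity
  linarith

set_option maxHeartbeats 1000000 in
lemma cone_inner (u v : Pt) (huv : ⟪u, v⟫_ℝ = ‖u‖ * ‖v‖ / 2) {x y : Pt}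
    (hx : x ∈ cone2 u v) (hy : y ∈ cone2 u v) : ‖x‖ * ‖y‖ ≤ 2 * ⟪x, y⟫_ℝ := by
  obtain ⟨a, b, ha, hb, rfl⟩ := hx
  obtain ⟨c, d, hc, hd, rfl⟩ := hy
  set A := ‖u‖ with hA
  set B := ‖v‖ with hB
  have hA0 : 0 ≤ A := norm_nonneg u
  have hB0 : 0 ≤ B := norm_nonneg v
  have huu : ⟪u, u⟫_ℝ = A^2 := real_inner_self_eq_norm_sq u
  have hvv : ⟪v, v⟫_ℝ = B^2 := real_inner_self_eq_norm_sq v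
  have hvu : ⟪v, u⟫_ℝ = A * B / 2 := by rw [real_inner_comm]; linarith [huv]
  have hinner : ⟪a • u + b • v, c • u + d • v⟫_ℝ
      = (a*A)*(c*A) + ((a*A)*(d*B) + (b*B)*(c*A))/2 + (b*B)*(d*B) := by
    simp only [inner_add_add_self, inner_add_left, inner_add_right, real_inner_smul_left,
      real_inner_smul_right, huu, hvv, huv, hvu]
    ring
  have hnx : ‖a • u + b • v‖^2 = (a*A)^2 + (a*A)*(b*B) + (b*B)^2 := by
    rw [← real_inner_self_eq_norm_sq]
    simp only [inner_add_add_self, real_inner_smul_left, real_inner_smul_right, huu, hvv, huv, hvu]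
    ring
  have hny : ‖c • u + d • v‖^2 = (c*A)^2 + (c*A)*(d*B) + (d*B)^2 := by
    rw [← real_inner_self_eq_norm_sq]
    simp only [inner_add_add_self, real_inner_smul_left, real_inner_smul_right, huu, hvv, huv, hvu]
    ring
  have hp1 : (0:ℝ) ≤ a*A := mul_nonneg ha hA0
  have hp2 : (0:ℝ) ≤ b*B := mul_nonneg hb hB0
  have hq1 : (0:ℝ) ≤ c*A := mul_nonneg hc hA0
  have hq2 : (0:ℝ) ≤ d*B := mul_nonneg hd hB0
  have hkey := key_poly (a*A) (b*B) (c*A) (d*B) hp1 hp2 hq1 hq2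
  have hiNN : 0 ≤ 2 * ⟪a • u + b • v, c • u + d • v⟫_ℝ := by
    rw [hinner]; positivity
  have hsq : (‖a • u + b • v‖ * ‖c • u + d • v‖)^2
      ≤ (2 * ⟪a • u + b • v, c • u + d • v⟫_ℝ)^2 := by
    rw [mul_pow, hnx, hny, hinner]
    have h2 : (2 * ((a*A)*(c*A) + ((a*A)*(d*B) + (b*B)*(c*A))/2 + (b*B)*(d*B)))^2
        = (2*((a*A)*(c*A) + (b*B)*(d*B)) + (a*A)*(d*B) + (b*B)*(c*A))^2 := by ring
    rw [h2]
    exact hkey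
  have hN : 0 ≤ ‖a • u + b • v‖ * ‖c • u + d • v‖ :=
    mul_nonneg (norm_nonneg _) (norm_nonneg _)
  exact (pow_le_pow_iff_left₀ hN hiNN (by norm_num)).mp hsq

lemma wedge_s17 (u v : Pt) (huv : ⟪u, v⟫_ℝ = ‖u‖ * ‖v‖ / 2) (p q x : Pt)
    (hQ : q - p ∈ cone2 u v) (hX : x - p ∈ cone2 u v) (hxp : x ≠ p)
    (hlt : dist p x < dist p q) : dist q x < dist p q := by
  have hd1 : dist p x = ‖x - p‖ := by rw [dist_eq_norm, norm_sub_rev]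
  have hd2 : dist p q = ‖q - p‖ := by rw [dist_eq_norm, norm_sub_rev]
  have hd3 : dist q x = ‖(x - p) - (q - p)‖ := by
    have e : x - q = (x - p) - (q - p) := by abel
    rw [dist_eq_norm, norm_sub_rev, e]
  have hpos : 0 < ‖x - p‖ := by
    rw [norm_pos_iff]; exact sub_ne_zero.mpr hxp
  have hlt' : ‖x - p‖ < ‖q - p‖ := by rwa [hd1, hd2] at hlt
  have hin := cone_inner u v huv hX hQ
  have hexp : ‖(x - p) - (q - p)‖^2
      = ‖x - p‖^2 - 2 * ⟪x - p, q - p⟫_ℝ + ‖q - p‖^2 := by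
    rw [norm_sub_sq_real]
  have hsq : ‖(x - p) - (q - p)‖^2 < ‖q - p‖^2 := by nlinarith
  rw [hd3, hd2]
  nlinarith [norm_nonneg ((x - p) - (q - p)), norm_nonneg (q - p), hsq]

theorem non_gng_edge_gives_many_rng_witnesses (P : Finset Pt) (p q : Pt) (hpq : p ≠ q)
    (u v : Pt) (hu : u ≠ 0) (hv : v ≠ 0)
    (hang : InnerProductGeometry.angle u v = π / 3)
    (hq : q - p ∈ cone2 u v)
    (h : 16 < (P.filter (fun x => x ≠ p ∧ x - p ∈ cone2 u v ∧ dist p x < dist p q)).card) :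
    17 ≤ (P.filter (fun x => dist p x < dist p q ∧ dist q x < dist p q)).card := by
  have huv : ⟪u, v⟫_ℝ = ‖u‖ * ‖v‖ / 2 := by
    have hc := InnerProductGeometry.cos_angle_mul_norm_mul_norm u v
    rw [hang, Real.cos_pi_div_three] at hc
    linarith
  have hsub : (P.filter (fun x => x ≠ p ∧ x - p ∈ cone2 u v ∧ dist p x < dist p q))
      ⊆ (P.filter (fun x => dist p x < dist p q ∧ dist q x < dist p q)) := by
    intro x hx
    rw [Finset.mem_filter] at hx ⊢
    obtain ⟨hxP, hxp, hxc, hxd⟩ := hx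
    exact ⟨hxP, hxd, wedge_s17 u v huv p q x hq hxc hxp hxd⟩
  calc 17 ≤ (P.filter (fun x => x ≠ p ∧ x - p ∈ cone2 u v ∧ dist p x < dist p q)).card := h
    _ ≤ _ := Finset.card_le_card hsub
end
end
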